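/- Non-shared-action transitions commute with conjunction of TIOAs under an invariant condition: let A^1 and A^2 be TIOAs with Act_i^1 ∩ Act_o^2 = ∅, Act_o^1 ∩ Act_i^2 = ∅ and disjoint clock sets. Identify the states of X = ⟦A^1 ∧ A^2⟧ and Y = ⟦A^1⟧ ∧ ⟦A^2⟧ via the canonical bijection ((l^1,l^2), v) ↔ ((l^1, v|_{Clk^1}), (l^2, v|_{Clk^2})). Let a ∈ Act^1 \ Act^2 and let q1, q2 be states with q2 = ((l2^1, l2^2), v2). If v2 ⊨ Inv^2(l2^2), then q1 →a q2 in X if and only if q1 →a q2 in Y. -/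
import Mathlib


open scoped NNReal

/-- A (raw) Timed I/O Transition System over an ambient action type `Act`
and state type `Q`.  The actual sets of input and output actions are the
fields `inputs` and `outputs`; `actTrans` is the action-labelled part of
the transition relation and `delayTrans` the delay-labelled part. -/
structure TIOTS (Act : Type) (Q : Type) where
  init : Q
  inputs : Set Act
  outputs : Set Act
  actTrans : Q → Act → Q → Prop
  delayTrans : Q → ℝ≥0 → Q → Prop

namespace TIOTS

variable {Act Q Q1 Q2 Q3 : Type}

/-- The alphabet (action set) of a TIOTS. -/
def acts (S : TIOTS Act Q) : Set Act := S.inputs ∪ S.outputs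

/-- The axioms of Timed I/O Transition Systems: inputs and outputs are
disjoint, action transitions are labelled by actions of the alphabet,
determinism (for actions and delays), time reflexivity and time additivity. -/
def IsTIOTS (S : TIOTS Act Q) : Prop :=
  Disjoint S.inputs S.outputs ∧
  (∀ q a q', S.actTrans q a q' → a ∈ S.acts) ∧
  (∀ q a q' q'', S.actTrans q a q' → S.actTrans q a q'' → q' = q'') ∧
  (∀ q (d : ℝ≥0) q' q'', S.delayTrans q d q' → S.delayTrans q d q'' → q' = q'') ∧
  (∀ q, S.delayTrans q 0 q) ∧
  (∀ q q'' (d₁ d₂ : ℝ≥0),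
    S.delayTrans q (d₁ + d₂) q'' ↔ ∃ q', S.delayTrans q d₁ q' ∧ S.delayTrans q' d₂ q'')

/-- Input-enabledness: every state accepts every input of the alphabet. -/
def InputEnabled (S : TIOTS Act Q) : Prop :=
  ∀ q, ∀ a ∈ S.inputs, ∃ q', S.actTrans q a q'

/-- A specification is an input-enabled TIOTS. -/
def IsSpecification (S : TIOTS Act Q) : Prop :=
  S.IsTIOTS ∧ S.InputEnabled

/-- A state allows independent progress if it can delay forever, or can
delay until an output is enabled. -/
def IndependentProgress (S : TIOTS Act Q) (q : Q) : Prop :=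
  (∀ d : ℝ≥0, ∃ q', S.delayTrans q d q') ∨
  (∃ (d : ℝ≥0) (q' : Q), ∃ o ∈ S.outputs,
    S.delayTrans q d q' ∧ ∃ q'', S.actTrans q' o q'')

/-- Output urgency of a state: if an output is enabled, no positive delay is. -/
def OutputUrgent (S : TIOTS Act Q) (q : Q) : Prop :=
  ∀ o ∈ S.outputs, ∀ (q' : Q) (d : ℝ≥0) (q'' : Q),
    S.actTrans q o q' → S.delayTrans q d q'' → d = 0

/-- An implementation is a specification all of whose states are
output urgent and allow independent progress. -/
def IsImplementation (P : TIOTS Act Q) : Prop :=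
  P.IsSpecification ∧ ∀ q, P.OutputUrgent q ∧ P.IndependentProgress q

/-- A locally consistent specification: every state allows independent progress. -/
def LocallyConsistent (S : TIOTS Act Q) : Prop :=
  S.IsSpecification ∧ ∀ q, S.IndependentProgress q

/-- Refinement `S ≤ T` (including the side conditions on the alphabets). -/
def Refines (S : TIOTS Act Q1) (T : TIOTS Act Q2) : Prop :=
  Disjoint S.inputs T.outputs ∧ Disjoint S.outputs T.inputs ∧
  S.inputs ⊆ T.inputs ∧ T.outputs ⊆ S.outputs ∧
  ∃ R : Q1 → Q2 → Prop,
    R S.init T.init ∧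
    ∀ s t, R s t →
      (∀ a ∈ T.inputs ∩ S.inputs, ∀ t', T.actTrans t a t' →
        ∃ s', S.actTrans s a s' ∧ R s' t') ∧
      (∀ a ∈ T.inputs \ S.inputs, ∀ t', T.actTrans t a t' → R s t') ∧
      (∀ a ∈ S.outputs ∩ T.outputs, ∀ s', S.actTrans s a s' →
        ∃ t', T.actTrans t a t' ∧ R s' t') ∧
      (∀ a ∈ S.outputs \ T.outputs, ∀ s', S.actTrans s a s' → R s' t) ∧
      (∀ (d : ℝ≥0) (s' : Q1), S.delayTrans s d s' →
        ∃ t', T.delayTrans t d t' ∧ R s' t')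

/-- `Mod S P` : `P` belongs to `mod(S)`, i.e. `P` is an implementation over
the alphabet of `S` satisfying (refining) `S`. -/
def Mod (S : TIOTS Act Q1) (P : TIOTS Act Q2) : Prop :=
  P.IsImplementation ∧ P.inputs = S.inputs ∧ P.outputs = S.outputs ∧ P.Refines S

/-- The TIOTS obtained from `S` by replacing the initial state by `q`. -/
def withInit (S : TIOTS Act Q) (q : Q) : TIOTS Act Q := { S with init := q }

/-- Reachability by finite sequences of action and delay transitions. -/
inductive Reach (S : TIOTS Act Q) : Q → Q → Prop where
  | refl (q : Q) : Reach S q q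
  | act {q q' q'' : Q} (a : Act) : S.actTrans q a q' → Reach S q' q'' → Reach S q q''
  | delay {q q' q'' : Q} (d : ℝ≥0) : S.delayTrans q d q' → Reach S q' q'' → Reach S q q''

/-- The set of error states relative to a set `X`. -/
def errSet (S : TIOTS Act Q) (X : Set Q) : Set Q :=
  { q | (∃ d : ℝ≥0, ¬ ∃ q', S.delayTrans q d q') ∧
        ∀ (d : ℝ≥0), ∀ o ∈ S.outputs, ∀ q', S.delayTrans q d q' →
          ((¬ ∃ q'', S.actTrans q' o q'') ∨ ∀ q'', S.actTrans q' o q'' → q'' ∈ X) }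

/-- The operator `Θ` whose greatest fixpoint is the set of consistent states. -/
def Theta (S : TIOTS Act Q) (X : Set Q) : Set Q :=
  (Set.univ \ S.errSet (Set.univ \ X)) ∩
  { q | ∀ d : ℝ≥0,
      (∀ q', S.delayTrans q d q' →
        (q' ∈ X ∧ ∀ i ∈ S.inputs, ∃ q'', q'' ∈ X ∧ S.actTrans q' i q'')) ∨
      (∃ d' : ℝ≥0, d' ≤ d ∧ ∃ q' q'', q' ∈ X ∧ q'' ∈ X ∧ ∃ o ∈ S.outputs,
        S.delayTrans q d' q' ∧ S.actTrans q' o q'' ∧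
        ∀ i ∈ S.inputs, ∃ q''', q''' ∈ X ∧ S.actTrans q' i q''') }

/-- The set of consistent states: the greatest fixpoint of the monotone
operator `Θ`, given by Knaster–Tarski as the union of all postfixed points. -/
def consSet (S : TIOTS Act Q) : Set Q := ⋃₀ { X | X ⊆ S.Theta X }

/-- Adversarial pruning `S^Δ`: restrict the states to the consistent ones and
restrict the transition relation accordingly. -/
def prune (S : TIOTS Act Q) (h : S.init ∈ S.consSet) :
    TIOTS Act {q : Q // q ∈ S.consSet} where
  init := ⟨S.init, h⟩
  inputs := S.inputs
  outputs := S.outputs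
  actTrans := fun q a q' => S.actTrans q.1 a q'.1
  delayTrans := fun q d q' => S.delayTrans q.1 d q'.1

/-- Conjunction of TIOTSs. -/
def conj (S : TIOTS Act Q1) (T : TIOTS Act Q2) : TIOTS Act (Q1 × Q2) where
  init := (S.init, T.init)
  inputs := S.inputs ∪ T.inputs
  outputs := S.outputs ∪ T.outputs
  actTrans := fun q a q' =>
    (a ∈ S.acts ∩ T.acts ∧ S.actTrans q.1 a q'.1 ∧ T.actTrans q.2 a q'.2) ∨
    (a ∈ S.acts \ T.acts ∧ S.actTrans q.1 a q'.1 ∧ q'.2 = q.2) ∨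
    (a ∈ T.acts \ S.acts ∧ T.actTrans q.2 a q'.2 ∧ q'.1 = q.1)
  delayTrans := fun q d q' => S.delayTrans q.1 d q'.1 ∧ T.delayTrans q.2 d q'.2

/-- Parallel composition of TIOTSs. -/
def par (S : TIOTS Act Q1) (T : TIOTS Act Q2) : TIOTS Act (Q1 × Q2) where
  init := (S.init, T.init)
  inputs := (S.inputs \ T.outputs) ∪ (T.inputs \ S.outputs)
  outputs := S.outputs ∪ T.outputs
  actTrans := fun q a q' =>
    (a ∈ S.acts ∩ T.acts ∧ S.actTrans q.1 a q'.1 ∧ T.actTrans q.2 a q'.2) ∨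
    (a ∈ S.acts \ T.acts ∧ S.actTrans q.1 a q'.1 ∧ q'.2 = q.2) ∨
    (a ∈ T.acts \ S.acts ∧ T.actTrans q.2 a q'.2 ∧ q'.1 = q.1)
  delayTrans := fun q d q' => S.delayTrans q.1 d q'.1 ∧ T.delayTrans q.2 d q'.2

/-- States of the quotient: pairs of states, a universal state and an error state. -/
inductive QSt (Q1 Q2 : Type) where
  | st : Q1 → Q2 → QSt Q1 Q2
  | univ : QSt Q1 Q2
  | err : QSt Q1 Q2

/-- Action transitions of the quotient `T \\ S`. -/
def quotAct (T : TIOTS Act Q1) (S : TIOTS Act Q2) :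
    QSt Q1 Q2 → Act → QSt Q1 Q2 → Prop
  | QSt.st qT qS, a, QSt.st qT' qS' =>
      (a ∈ S.acts ∩ T.acts ∧ T.actTrans qT a qT' ∧ S.actTrans qS a qS') ∨
      (a ∈ S.acts \ T.acts ∧ S.actTrans qS a qS' ∧ qT' = qT) ∨
      (a ∈ T.acts \ S.acts ∧ T.actTrans qT a qT' ∧ qS' = qS)
  | QSt.st _ qS, a, QSt.univ => a ∈ S.outputs ∧ ¬ ∃ qS', S.actTrans qS a qS'
  | QSt.st qT qS, a, QSt.err =>
      a ∈ S.outputs ∩ T.outputs ∧ (¬ ∃ qT', T.actTrans qT a qT') ∧ ∃ qS', S.actTrans qS a qS'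
  | QSt.univ, a, QSt.univ =>
      a ∈ (T.inputs ∪ S.outputs) ∪ ((T.outputs \ S.outputs) ∪ (S.inputs \ T.inputs))
  | QSt.err, a, QSt.err => a ∈ T.inputs ∪ S.outputs
  | _, _, _ => False

/-- Delay transitions of the quotient `T \\ S`. -/
def quotDelay (T : TIOTS Act Q1) (S : TIOTS Act Q2) :
    QSt Q1 Q2 → ℝ≥0 → QSt Q1 Q2 → Prop
  | QSt.st qT qS, d, QSt.st qT' qS' => T.delayTrans qT d qT' ∧ S.delayTrans qS d qS'
  | QSt.st _ qS, d, QSt.univ => ¬ ∃ qS', S.delayTrans qS d qS'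
  | QSt.univ, _, QSt.univ => True
  | _, _, _ => False

/-- The quotient `T \\ S`. -/
def quot (T : TIOTS Act Q1) (S : TIOTS Act Q2) : TIOTS Act (QSt Q1 Q2) where
  init := QSt.st T.init S.init
  inputs := T.inputs ∪ S.outputs
  outputs := (T.outputs \ S.outputs) ∪ (S.inputs \ T.inputs)
  actTrans := T.quotAct S
  delayTrans := T.quotDelay S

end TIOTS

/-- Clock guards: Boolean formulas over atomic clock constraints `x ≺ n`. -/
inductive ClockGuard (C : Type) where
  | tt : ClockGuard C
  | ff : ClockGuard C
  | lt : C → ℕ → ClockGuard C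
  | le : C → ℕ → ClockGuard C
  | gt : C → ℕ → ClockGuard C
  | ge : C → ℕ → ClockGuard C
  | eq : C → ℕ → ClockGuard C
  | and : ClockGuard C → ClockGuard C → ClockGuard C
  | or : ClockGuard C → ClockGuard C → ClockGuard C
  | not : ClockGuard C → ClockGuard C

namespace ClockGuard

variable {C C' : Type}

/-- Satisfaction of a clock guard by a clock valuation. -/
def sat (v : C → ℝ≥0) : ClockGuard C → Prop
  | tt => True
  | ff => False
  | lt x n => v x < (n : ℝ≥0)
  | le x n => v x ≤ (n : ℝ≥0)
  | gt x n => (n : ℝ≥0) < v x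
  | ge x n => (n : ℝ≥0) ≤ v x
  | eq x n => v x = (n : ℝ≥0)
  | and g₁ g₂ => sat v g₁ ∧ sat v g₂
  | or g₁ g₂ => sat v g₁ ∨ sat v g₂
  | not g => ¬ sat v g

/-- Renaming of the clocks of a guard. -/
def map (f : C → C') : ClockGuard C → ClockGuard C'
  | tt => tt
  | ff => ff
  | lt x n => lt (f x) n
  | le x n => le (f x) n
  | gt x n => gt (f x) n
  | ge x n => ge (f x) n
  | eq x n => eq (f x) n
  | and g₁ g₂ => and (map f g₁) (map f g₂)
  | or g₁ g₂ => or (map f g₁) (map f g₂)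
  | not g => not (map f g)

end ClockGuard

/-- A Timed I/O Automaton over action type `Act`, location type `L`
and clock type `C`. -/
structure TIOA (Act L C : Type) where
  init : L
  inputs : Set Act
  outputs : Set Act
  edges : Set (L × Act × ClockGuard C × Set C × L)
  inv : L → ClockGuard C

namespace TIOA

variable {Act L C L1 L2 C1 C2 : Type}

/-- The alphabet (action set) of a TIOA. -/
def acts (A : TIOA Act L C) : Set Act := A.inputs ∪ A.outputs

open Classical in
/-- Reset the clocks in `c` to zero. -/
noncomputable def resetVal (v : C → ℝ≥0) (c : Set C) : C → ℝ≥0 :=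
  fun x => if x ∈ c then 0 else v x

/-- The semantics of a TIOA as a TIOTS. -/
noncomputable def sem (A : TIOA Act L C) : TIOTS Act (L × (C → ℝ≥0)) where
  init := (A.init, fun _ => 0)
  inputs := A.inputs
  outputs := A.outputs
  actTrans := fun q a q' =>
    ∃ g c, (q.1, a, g, c, q'.1) ∈ A.edges ∧ ClockGuard.sat q.2 g ∧
      q'.2 = resetVal q.2 c ∧ ClockGuard.sat q'.2 (A.inv q'.1)
  delayTrans := fun q d q' =>
    q'.1 = q.1 ∧ q'.2 = (fun x => q.2 x + d) ∧
    ClockGuard.sat q'.2 (A.inv q.1) ∧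
    ∀ d' : ℝ≥0, d' < d → ClockGuard.sat (fun x => q.2 x + d') (A.inv q.1)

/-- Conjunction of TIOAs (with disjoint clock sets, realized as a sum type). -/
def conjA (A : TIOA Act L1 C1) (B : TIOA Act L2 C2) :
    TIOA Act (L1 × L2) (C1 ⊕ C2) where
  init := (A.init, B.init)
  inputs := A.inputs ∪ B.inputs
  outputs := A.outputs ∪ B.outputs
  edges := { e |
    (∃ l1 l2 a g1 g2 c1 c2 l1' l2',
      e = ((l1, l2), a,
            ClockGuard.and (ClockGuard.map Sum.inl g1) (ClockGuard.map Sum.inr g2),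
            Sum.inl '' c1 ∪ Sum.inr '' c2, (l1', l2')) ∧
      a ∈ A.acts ∩ B.acts ∧ (l1, a, g1, c1, l1') ∈ A.edges ∧ (l2, a, g2, c2, l2') ∈ B.edges) ∨
    (∃ l1 l2 a g1 c1 l1',
      e = ((l1, l2), a, ClockGuard.map Sum.inl g1, Sum.inl '' c1, (l1', l2)) ∧
      a ∈ A.acts \ B.acts ∧ (l1, a, g1, c1, l1') ∈ A.edges) ∨
    (∃ l1 l2 a g2 c2 l2',
      e = ((l1, l2), a, ClockGuard.map Sum.inr g2, Sum.inr '' c2, (l1, l2')) ∧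
      a ∈ B.acts \ A.acts ∧ (l2, a, g2, c2, l2') ∈ B.edges) }
  inv := fun l =>
    ClockGuard.and (ClockGuard.map Sum.inl (A.inv l.1)) (ClockGuard.map Sum.inr (B.inv l.2))

/-- Parallel composition of TIOAs (with disjoint clock sets). -/
def parA (A : TIOA Act L1 C1) (B : TIOA Act L2 C2) :
    TIOA Act (L1 × L2) (C1 ⊕ C2) where
  init := (A.init, B.init)
  inputs := (A.inputs \ B.outputs) ∪ (B.inputs \ A.outputs)
  outputs := A.outputs ∪ B.outputs
  edges := { e |
    (∃ l1 l2 a g1 g2 c1 c2 l1' l2',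
      e = ((l1, l2), a,
            ClockGuard.and (ClockGuard.map Sum.inl g1) (ClockGuard.map Sum.inr g2),
            Sum.inl '' c1 ∪ Sum.inr '' c2, (l1', l2')) ∧
      a ∈ A.acts ∩ B.acts ∧ (l1, a, g1, c1, l1') ∈ A.edges ∧ (l2, a, g2, c2, l2') ∈ B.edges) ∨
    (∃ l1 l2 a g1 c1 l1',
      e = ((l1, l2), a, ClockGuard.map Sum.inl g1, Sum.inl '' c1, (l1', l2)) ∧
      a ∈ A.acts \ B.acts ∧ (l1, a, g1, c1, l1') ∈ A.edges) ∨
    (∃ l1 l2 a g2 c2 l2',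
      e = ((l1, l2), a, ClockGuard.map Sum.inr g2, Sum.inr '' c2, (l1, l2')) ∧
      a ∈ B.acts \ A.acts ∧ (l2, a, g2, c2, l2') ∈ B.edges) }
  inv := fun l =>
    ClockGuard.and (ClockGuard.map Sum.inl (A.inv l.1)) (ClockGuard.map Sum.inr (B.inv l.2))

/-- The canonical bijection between the states of `⟦A¹ ∧ A²⟧` (resp. `⟦A¹ ∥ A²⟧`)
and the states of `⟦A¹⟧ ∧ ⟦A²⟧` (resp. `⟦A¹⟧ ∥ ⟦A²⟧`):
`((l¹,l²), v) ↦ ((l¹, v∘inl), (l², v∘inr))`. -/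
def stateMap {L1 L2 C1 C2 : Type} (q : (L1 × L2) × ((C1 ⊕ C2) → ℝ≥0)) :
    (L1 × (C1 → ℝ≥0)) × (L2 × (C2 → ℝ≥0)) :=
  ((q.1.1, fun x => q.2 (Sum.inl x)), (q.1.2, fun x => q.2 (Sum.inr x)))

end TIOA

lemma sat_map_iff {C C' : Type} (f : C → C') (v : C' → ℝ≥0) (g : ClockGuard C) :
    ClockGuard.sat v (ClockGuard.map f g) ↔ ClockGuard.sat (fun x => v (f x)) g := by
  induction g <;> simp [ClockGuard.map, ClockGuard.sat, *]

/-- Non-shared-action transitions commute with conjunction of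
TIOAs, under the condition that the target valuation satisfies the invariant
of the second component's location. -/
theorem conjA_sem_nonshared_iff {Act L1 L2 C1 C2 : Type}
    (A : TIOA Act L1 C1) (B : TIOA Act L2 C2)
    (h1 : Disjoint A.inputs B.outputs) (h2 : Disjoint A.outputs B.inputs)
    (a : Act) (ha : a ∈ A.acts \ B.acts)
    (q1 q2 : (L1 × L2) × ((C1 ⊕ C2) → ℝ≥0))
    (hinv : ClockGuard.sat (fun x => q2.2 (Sum.inr x)) (B.inv q2.1.2)) :
    ((A.conjA B).sem).actTrans q1 a q2 ↔
      ((A.sem).conj (B.sem)).actTrans (TIOA.stateMap q1) a (TIOA.stateMap q2) := by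
  classical
  obtain ⟨⟨l1, l2⟩, v1⟩ := q1
  obtain ⟨⟨l1', l2'⟩, v2⟩ := q2
  have haA : a ∈ A.acts := ha.1
  have haB : a ∉ B.acts := ha.2
  constructor
  · rintro ⟨g, c, hedge, hsat, hreset, hinv2⟩
    rcases hedge with ⟨_, _, a', _, _, _, _, _, _, heq, haB', _⟩ |
        ⟨L1a, L2a, a', g1, c1, l1'', heq, _, hA⟩ | ⟨_, _, a', _, _, _, heq, haB', _⟩
    · simp only [Prod.mk.injEq] at heq
      exact absurd (heq.2.1 ▸ haB'.2) haB
    · simp only [Prod.mk.injEq] at heq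
      obtain ⟨⟨h1l, h2l⟩, rfl, rfl, rfl, h1r, h2r⟩ := heq
      subst h1l h2l h1r h2r
      refine Or.inr (Or.inl ⟨⟨haA, haB⟩, ⟨g1, c1, hA, ?_, ?_, ?_⟩, ?_⟩)
      · exact (sat_map_iff Sum.inl v1 g1).mp hsat
      · funext x
        have h := congrFun hreset (Sum.inl x)
        simp only [TIOA.resetVal] at h
        simp only [TIOA.stateMap, TIOA.resetVal]
        exact h.trans (if_congr (by simp) rfl rfl)
      · exact ((sat_map_iff Sum.inl v2 (A.inv l1')).mp
          ((ClockGuard.sat.eq_8 v2 _ _ ▸ hinv2 : _)).1)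
      · simp only [TIOA.stateMap]
        have hf : (fun x => v2 (Sum.inr x)) = (fun x => v1 (Sum.inr x)) := by
          funext x
          have := congrFun hreset (Sum.inr x)
          simpa [TIOA.resetVal, Set.mem_image] using this
        rw [hf]
    · simp only [Prod.mk.injEq] at heq
      exact absurd (heq.2.1 ▸ haB'.1) haB
  · rintro (⟨⟨_, hBa⟩, _⟩ | ⟨_, ⟨g, c, hA, hsat, hreset, hinvA⟩, h2eq⟩ | ⟨⟨hBa, _⟩, _⟩)
    · exact absurd hBa haB
    · simp only [TIOA.stateMap, Prod.mk.injEq] at h2eq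
      obtain ⟨hl2, hv2⟩ := h2eq
      subst hl2
      refine ⟨ClockGuard.map Sum.inl g, Sum.inl '' c,
        Or.inr (Or.inl ⟨l1, l2', a, g, c, l1', rfl, ha, hA⟩),
        (sat_map_iff Sum.inl v1 g).mpr hsat, ?_, ?_⟩
      · funext x
        cases x with
        | inl x =>
          have h := congrFun hreset x
          simp only [TIOA.stateMap, TIOA.resetVal] at h
          simp only [TIOA.resetVal]
          exact h.trans (if_congr (by simp) rfl rfl)
        | inr x =>
          have := congrFun hv2 x
          simp [TIOA.resetVal, Set.mem_image, this]
      · exact ⟨(sat_map_iff Sum.inl v2 (A.inv l1')).mpr hinvA,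
          (sat_map_iff Sum.inr v2 (B.inv l2')).mpr hinv⟩
    · exact absurd hBa haB
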